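/- arXiv:2403.17891 — 2 statements merged into one kernel-verified Lean document; each statement's English description precedes it below -/
import Mathlib

section
/- For fixed logits g : Fin K → ℝ and any index k, the temperature-scaled softmax satisfies lim_{T→∞} T * (f_k(x;T) - 1/K) = (1/K²) * ∑_{j≠k} (g_k(x) - g_j(x)). In particular, f_k(x;T) → 1/K as T → ∞, and the first-order correction in 1/T is (1/K²)∑_{j≠k}(g_k - g_j). -/
/-!
As `T → ∞` every weight `exp (g j / T)` is `1 + g j / T + o(1 / T)`, so the normaliser tends to
`K` and `K f_k - 1 = (∑ j, (exp (g k / T) - exp (g j / T))) / ∑ j, exp (g j / T)` is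
`(∑ j, (g k - g j)) / (K T) + o(1 / T)`.
-/

open Real Finset Filter Topology

/-- `f_k(x;T)` with logits `g = g(x)`. -/
noncomputable def tempSoftmax {ι : Type*} [Fintype ι] (g : ι → ℝ) (T : ℝ) (k : ι) : ℝ :=
  exp (g k / T) / ∑ j, exp (g j / T)

lemma tendsto_exp_div_atTop (a : ℝ) : Tendsto (fun T : ℝ => exp (a / T)) atTop (𝓝 1) := by
  simpa [Function.comp_def] using
    (continuous_exp.tendsto 0).comp (tendsto_const_nhds.div_atTop tendsto_id)

/-- The slope of `t ↦ exp (a t)` at `0`, read along `t = 1 / T`. -/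
lemma tendsto_mul_exp_div_sub_one (a : ℝ) :
    Tendsto (fun T : ℝ => T * (exp (a / T) - 1)) atTop (𝓝 a) := by
  have hderiv : HasDerivAt (fun t => exp (a * t)) a 0 := by
    simpa using ((hasDerivAt_id (0 : ℝ)).const_mul a).exp
  refine (hderiv.tendsto_slope_zero_right.comp tendsto_inv_atTop_nhdsGT_zero).congr fun T => ?_
  simp [div_eq_mul_inv]

section Softmax

variable {ι : Type*} [Fintype ι] (g : ι → ℝ)

lemma tendsto_sum_exp_div_atTop :
    Tendsto (fun T : ℝ => ∑ j, exp (g j / T)) atTop (𝓝 (Fintype.card ι)) := by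
  simpa using tendsto_finsetSum univ fun j _ => tendsto_exp_div_atTop (g j)

lemma tempSoftmax_sub_inv_card (T : ℝ) (k : ι) :
    tempSoftmax g T k - 1 / Fintype.card ι
      = (∑ j, (exp (g k / T) - exp (g j / T))) / (Fintype.card ι * ∑ j, exp (g j / T)) := by
  have hS : 0 < ∑ j, exp (g j / T) := sum_pos (fun j _ => exp_pos _) ⟨k, mem_univ k⟩
  have hcard : (0 : ℝ) < Fintype.card ι := by exact_mod_cast Fintype.card_pos_iff.mpr ⟨k⟩
  rw [tempSoftmax, sum_sub_distrib, sum_const, card_univ, nsmul_eq_mul]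
  field_simp

variable (k : ι)

theorem tendsto_tempSoftmax_atTop :
    Tendsto (fun T => tempSoftmax g T k) atTop (𝓝 (1 / Fintype.card ι)) :=
  (tendsto_exp_div_atTop (g k)).div (tendsto_sum_exp_div_atTop g)
    (by exact_mod_cast (Fintype.card_pos_iff.mpr ⟨k⟩).ne')

theorem tendsto_mul_tempSoftmax_sub_inv_card :
    Tendsto (fun T => T * (tempSoftmax g T k - 1 / Fintype.card ι)) atTop
      (𝓝 ((∑ j, (g k - g j)) / Fintype.card ι ^ 2)) := by
  have hnum : Tendsto (fun T : ℝ => ∑ j, T * (exp (g k / T) - exp (g j / T))) atTop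
      (𝓝 (∑ j, (g k - g j))) :=
    tendsto_finsetSum univ fun j _ =>
      ((tendsto_mul_exp_div_sub_one (g k)).sub (tendsto_mul_exp_div_sub_one (g j))).congr
        fun T => by ring
  have hden : Tendsto (fun T : ℝ => Fintype.card ι * ∑ j, exp (g j / T)) atTop
      (𝓝 (Fintype.card ι ^ 2)) := by
    simpa [sq] using (tendsto_sum_exp_div_atTop g).const_mul (Fintype.card ι : ℝ)
  have hcard : (Fintype.card ι : ℝ) ≠ 0 := by exact_mod_cast (Fintype.card_pos_iff.mpr ⟨k⟩).ne'
  refine (hnum.div hden (pow_ne_zero 2 hcard)).congr fun T => ?_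
  rw [Pi.div_apply, tempSoftmax_sub_inv_card, ← mul_sum, mul_div_assoc]

end Softmax

theorem tempScaledSoftmax_firstOrder_general
    (K : ℕ) (g : Fin K → ℝ) (k : Fin K) :
    Filter.Tendsto
      (fun T : ℝ =>
        T * (Real.exp (g k / T) / (∑ j, Real.exp (g j / T)) - 1 / K))
      Filter.atTop
      (nhds ((1 / (K : ℝ) ^ 2) * ∑ j ∈ Finset.univ.erase k, (g k - g j))) ∧
    Filter.Tendsto
      (fun T : ℝ => Real.exp (g k / T) / ∑ j, Real.exp (g j / T))
      Filter.atTop (nhds (1 / K)) := by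
  have hsum : ∑ j ∈ univ.erase k, (g k - g j) = ∑ j, (g k - g j) := by
    rw [← sum_erase_add univ _ (mem_univ k), sub_self, add_zero]
  have hfirst := tendsto_mul_tempSoftmax_sub_inv_card g k
  have hlimit := tendsto_tempSoftmax_atTop g k
  rw [Fintype.card_fin] at hfirst hlimit
  rw [one_div_mul_eq_div, hsum]
  exact ⟨hfirst, hlimit⟩

theorem tempScaledSoftmax_firstOrder
    (K : ℕ) (hK : 0 < K) (g : Fin K → ℝ) (k : Fin K) :
    Filter.Tendsto
      (fun T : ℝ =>
        T * (Real.exp (g k / T) / (∑ j, Real.exp (g j / T)) - 1 / K))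
      Filter.atTop
      (nhds ((1 / (K : ℝ) ^ 2) * ∑ j ∈ Finset.univ.erase k, (g k - g j))) ∧
    Filter.Tendsto
      (fun T : ℝ => Real.exp (g k / T) / ∑ j, Real.exp (g j / T))
      Filter.atTop (nhds (1 / K)) :=
  tempScaledSoftmax_firstOrder_general K g k
end

section
/- Let β₁ < β₂ and fix a label i with distances d(k,i) not all equal. Then the soft label with parameter β₂ assigns strictly more mass to the true label: l_i^soft(i; β₂) > l_i^soft(i; β₁). Moreover, the entropy of the soft label distribution l^soft(i; β) is strictly decreasing in β. -/
open Real Finset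

theorem softLabel_concentration_monotone_in_beta
    (K : ℕ) (hK : 0 < K) (i : Fin K) (d : Fin K → Fin K → ℝ)
    (hd_nonneg : ∀ k, 0 ≤ d k i) (hd0 : d i i = 0)
    (hd_ne : ∃ k₁ k₂ : Fin K, d k₁ i ≠ d k₂ i)
    (l : ℝ → Fin K → ℝ)
    (hl : ∀ β k, l β k = Real.exp (-β * d k i) / ∑ j, Real.exp (-β * d j i))
    (β₁ β₂ : ℝ) (hβ₁ : 0 < β₁) (hββ : β₁ < β₂) :
    l β₁ i < l β₂ i ∧
    (-∑ k, l β₂ k * Real.log (l β₂ k)) < (-∑ k, l β₁ k * Real.log (l β₁ k)) := by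
  classical
  set Z : ℝ → ℝ := fun β => ∑ j, Real.exp (-β * d j i) with hZdef
  have hZpos : ∀ β, 0 < Z β := fun β =>
    Finset.sum_pos (fun j _ => Real.exp_pos _) ⟨i, Finset.mem_univ i⟩
  have hppos : ∀ β k, 0 < l β k := fun β k => by
    rw [hl]; exact div_pos (Real.exp_pos _) (hZpos β)
  have hpsum : ∀ β, ∑ k, l β k = 1 := fun β => by
    simp only [hl]; rw [← Finset.sum_div, div_self (hZpos β).ne']
  have hlog : ∀ β k, Real.log (l β k) = -β * d k i - Real.log (Z β) := fun β k => by
    rw [hl, Real.log_div (Real.exp_ne_zero _) (hZpos β).ne', Real.log_exp]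
  -- existence of a strictly positive distance
  obtain ⟨k₁, k₂, hk12⟩ := hd_ne
  have hk0 : ∃ k, 0 < d k i := by
    rcases lt_or_eq_of_le (hd_nonneg k₁) with h | h
    · exact ⟨k₁, h⟩
    · refine ⟨k₂, lt_of_le_of_ne (hd_nonneg k₂) fun h2 => hk12 ?_⟩
      rw [← h, ← h2]
  obtain ⟨k₀, hk₀⟩ := hk0
  -- Part 1
  have hZlt : Z β₂ < Z β₁ := by
    apply Finset.sum_lt_sum
    · intro j _
      apply Real.exp_le_exp.2
      nlinarith [hd_nonneg j]
    · exact ⟨k₀, Finset.mem_univ k₀, Real.exp_lt_exp.2 (by nlinarith)⟩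
  have part1 : l β₁ i < l β₂ i := by
    rw [hl, hl, hd0]
    simp only [mul_zero, Real.exp_zero]
    exact one_div_lt_one_div_of_lt (hZpos β₂) hZlt
  -- Entropy identity: H(β) = log Z β + β * E(β)
  have hA : ∀ β, -∑ k, l β k * Real.log (l β k)
      = Real.log (Z β) + β * ∑ k, l β k * d k i := by
    intro β
    have h1 : ∑ k, l β k * Real.log (l β k)
        = ∑ k, (-(β * (l β k * d k i)) - Real.log (Z β) * l β k) :=
      Finset.sum_congr rfl fun k _ => by rw [hlog]; ring
    rw [h1, Finset.sum_sub_distrib, Finset.sum_neg_distrib, ← Finset.mul_sum,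
      ← Finset.mul_sum, hpsum]
    ring
  -- Strict Gibbs inequality
  have hGibbs : ∀ β γ : ℝ, (∃ k, l γ k ≠ l β k) →
      -∑ k, l γ k * Real.log (l γ k)
        < Real.log (Z β) + β * ∑ k, l γ k * d k i := by
    intro β γ ⟨kw, hkw⟩
    have hdivne : ∀ a b : ℝ, b ≠ 0 → a ≠ b → a / b ≠ 1 := by
      intro a b hb hab h
      rw [div_eq_one_iff_eq hb] at h
      exact hab h
    have key : ∑ k, l γ k * Real.log (l β k / l γ k)
        < ∑ k, l γ k * (l β k / l γ k - 1) := by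
      apply Finset.sum_lt_sum
      · intro k _
        rcases eq_or_ne (l β k) (l γ k) with h | h
        · rw [h, div_self (hppos γ k).ne']; simp
        · refine le_of_lt (mul_lt_mul_of_pos_left ?_ (hppos γ k))
          exact Real.log_lt_sub_one_of_pos (div_pos (hppos β k) (hppos γ k))
            (hdivne _ _ (hppos γ k).ne' h)
      · refine ⟨kw, Finset.mem_univ kw, mul_lt_mul_of_pos_left ?_ (hppos γ kw)⟩
        exact Real.log_lt_sub_one_of_pos (div_pos (hppos β kw) (hppos γ kw))
          (hdivne _ _ (hppos γ kw).ne' hkw.symm)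
    have hrhs : ∑ k, l γ k * (l β k / l γ k - 1) = 0 := by
      have h2 : ∀ k ∈ Finset.univ, l γ k * (l β k / l γ k - 1) = l β k - l γ k :=
        fun k _ => by rw [mul_sub, mul_div_cancel₀ _ (hppos γ k).ne', mul_one]
      rw [Finset.sum_congr rfl h2, Finset.sum_sub_distrib, hpsum, hpsum, sub_self]
    have hlhs : ∑ k, l γ k * Real.log (l β k / l γ k)
        = (-∑ k, l γ k * Real.log (l γ k))
          - Real.log (Z β) - β * ∑ k, l γ k * d k i := by
      have h3 : ∀ k ∈ Finset.univ, l γ k * Real.log (l β k / l γ k)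
          = (-(β * (l γ k * d k i)) - Real.log (Z β) * l γ k)
            - l γ k * Real.log (l γ k) := fun k _ => by
        rw [Real.log_div (hppos β k).ne' (hppos γ k).ne', hlog]; ring
      rw [Finset.sum_congr rfl h3, Finset.sum_sub_distrib, Finset.sum_sub_distrib,
        Finset.sum_neg_distrib, ← Finset.mul_sum, ← Finset.mul_sum, hpsum]
      ring
    rw [hrhs] at key
    rw [hlhs] at key
    linarith
  -- the two distributions differ somewhere
  have hne : ∃ k, l β₁ k ≠ l β₂ k := by
    by_contra h
    push_neg at h
    have hZeq : Z β₁ = Z β₂ := by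
      have hi := h i
      rw [hl, hl, hd0] at hi
      simp only [mul_zero, Real.exp_zero] at hi
      rw [div_eq_div_iff (hZpos β₁).ne' (hZpos β₂).ne'] at hi
      linarith
    have hk := h k₀
    have e1 : (∑ j, Real.exp (-β₁ * d j i)) = Z β₁ := rfl
    have e2 : (∑ j, Real.exp (-β₂ * d j i)) = Z β₂ := rfl
    rw [hl, hl, e1, e2, ← hZeq,
      div_eq_div_iff (hZpos β₁).ne' (hZpos β₁).ne'] at hk
    have hexp : Real.exp (-β₁ * d k₀ i) = Real.exp (-β₂ * d k₀ i) :=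
      mul_right_cancel₀ (hZpos β₁).ne' hk
    have := Real.exp_eq_exp.1 hexp
    nlinarith
  have hne' : ∃ k, l β₂ k ≠ l β₁ k := hne.imp fun k hk => hk.symm
  -- assemble
  have G1 := hGibbs β₂ β₁ hne
  have G2 := hGibbs β₁ β₂ hne'
  have hA1 := hA β₁
  have hA2 := hA β₂
  refine ⟨part1, ?_⟩
  set E₁ := ∑ k, l β₁ k * d k i with hE₁
  set E₂ := ∑ k, l β₂ k * d k i with hE₂
  have hE : E₂ < E₁ := by nlinarith [G1, G2, hA1, hA2]
  have := mul_lt_mul_of_pos_left hE hβ₁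
  linarith
end
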